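/- arXiv:1401.6920 — 2 statements merged into one kernel-verified Lean document; each statement's English description precedes it below -/
import Mathlib

section
/- For the Gödel metric on ℝ⁴, the scalar curvature is the constant κ = 1/a², the Ricci tensor satisfies S_{ij} = κ ω_i ω_j at every point, where ω is the 1-form with components ω = (0, a e^{x¹}, 0, a), and consequently the Ricci tensor has rank 1 at every point; in particular the Gödel spacetime is quasi-Einstein. -/
noncomputable section

open scoped BigOperators

/-- A point of `ℝⁿ`. -/
abbrev Pt (n : ℕ) := Fin n → ℝ
/-- A (0,2)-tensor field on `ℝⁿ`, given by its components. -/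
abbrev Ten2 (n : ℕ) := Pt n → Fin n → Fin n → ℝ
/-- A (0,4)-tensor field on `ℝⁿ`, given by its components. -/
abbrev Ten4 (n : ℕ) := Pt n → Fin n → Fin n → Fin n → Fin n → ℝ

variable {n : ℕ}

/-- Partial derivative `∂ᵢ f` at `x`. -/
def pderiv (i : Fin n) (f : Pt n → ℝ) (x : Pt n) : ℝ :=
  fderiv ℝ f x (Pi.single i 1)

/-- Components `g^{ij}` of the inverse of the metric. -/
def ginv (g : Ten2 n) (x : Pt n) (i j : Fin n) : ℝ :=
  (Matrix.of (g x))⁻¹ i j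

/-- Christoffel symbols of the second kind, `Γ^h_{ij}` as a function of the point. -/
def christoffel (g : Ten2 n) (h i j : Fin n) (x : Pt n) : ℝ :=
  (1/2) * ∑ l, ginv g x h l *
    (pderiv i (fun y => g y l j) x + pderiv j (fun y => g y i l) x - pderiv l (fun y => g y i j) x)

/-- Curvature components `R^h_{ijk}`. -/
def curvUp (g : Ten2 n) (h i j k : Fin n) (x : Pt n) : ℝ :=
  pderiv j (christoffel g h i k) x - pderiv k (christoffel g h i j) x
    + ∑ l, christoffel g h j l x * christoffel g l i k x
    - ∑ l, christoffel g h k l x * christoffel g l i j x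

/-- The (0,4) Riemann–Christoffel curvature tensor `R_{hijk} = g_{hl} R^l_{ijk}`. -/
def riemann (g : Ten2 n) : Ten4 n := fun x h i j k => ∑ l, g x h l * curvUp g l i j k x

/-- The Ricci tensor `S_{ij} = R^k_{ikj}`. -/
def ricci (g : Ten2 n) : Ten2 n := fun x i j => ∑ k, curvUp g k i k j x

/-- The scalar curvature `κ = g^{ij} S_{ij}`. -/
def scalarCurv (g : Ten2 n) (x : Pt n) : ℝ := ∑ i, ∑ j, ginv g x i j * ricci g x i j

/-- Components `S_{ij,k}` of the covariant derivative of the Ricci tensor. -/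
def ricciCov (g : Ten2 n) (x : Pt n) (i j k : Fin n) : ℝ :=
  pderiv k (fun y => ricci g y i j) x
    - ∑ l, christoffel g l k i x * ricci g x l j
    - ∑ l, christoffel g l k j x * ricci g x i l

/-- The Kulkarni–Nomizu product of two symmetric (0,2)-tensors. -/
def kn (A B : Ten2 n) : Ten4 n := fun x X1 X2 X3 X4 =>
  A x X1 X4 * B x X2 X3 + A x X2 X3 * B x X1 X4 - A x X1 X3 * B x X2 X4 - A x X2 X4 * B x X1 X3

/-- The Gaussian curvature tensor `G = (1/2) g ∧ g`. -/
def Gten (g : Ten2 n) : Ten4 n := fun x i j k l => (1/2) * kn g g x i j k l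

/-- The Weyl conformal curvature tensor
`C = R − (1/(n−2)) g∧S + (κ/((n−2)(n−1))) G`. -/
def weyl (g : Ten2 n) : Ten4 n := fun x h i j k =>
  riemann g x h i j k - (1/((n:ℝ)-2)) * kn g (ricci g) x h i j k
    + (scalarCurv g x / (((n:ℝ)-2)*((n:ℝ)-1))) * Gten g x h i j k

/-- The conharmonic curvature tensor `conh(R) = R − (1/(n−2)) g∧S`. -/
def conh (g : Ten2 n) : Ten4 n := fun x h i j k =>
  riemann g x h i j k - (1/((n:ℝ)-2)) * kn g (ricci g) x h i j k

/-- The concircular curvature tensor `K = R − (κ/(n(n−1))) G`. -/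
def concirc (g : Ten2 n) : Ten4 n := fun x h i j k =>
  riemann g x h i j k - (scalarCurv g x / ((n:ℝ)*((n:ℝ)-1))) * Gten g x h i j k

/-- The (0,6)-tensor `T·T'` for (0,4)-tensors `T, T'`: the curvature-type tensor `T`
acts as a derivation (through the endomorphisms `𝒯(X,Y)` with
`g(𝒯(X,Y)Z,W) = T(X,Y,Z,W)`) on the (0,4)-tensor `T'`. -/
def dot44 (g : Ten2 n) (T T' : Ten4 n) :
    Pt n → Fin n → Fin n → Fin n → Fin n → Fin n → Fin n → ℝ :=
  fun x h i j k l m =>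
  -(∑ r, ∑ s, ginv g x r s *
    (T x l m h s * T' x r i j k + T x l m i s * T' x h r j k
      + T x l m j s * T' x h i r k + T x l m k s * T' x h i j r))

/-- The (0,4)-tensor `T·A` for a (0,4)-tensor `T` acting on a (0,2)-tensor `A`. -/
def dot42 (g : Ten2 n) (T : Ten4 n) (A : Ten2 n) :
    Pt n → Fin n → Fin n → Fin n → Fin n → ℝ :=
  fun x i j l m =>
  -(∑ r, ∑ s, ginv g x r s * (T x l m i s * A x r j + T x l m j s * A x i r))

/-- The Tachibana tensor `Q(A,T')` of a symmetric (0,2)-tensor `A`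
and a (0,4)-tensor `T'`, built from the endomorphisms `X ∧_A Y`. -/
def tach4 (A : Ten2 n) (T' : Ten4 n) :
    Pt n → Fin n → Fin n → Fin n → Fin n → Fin n → Fin n → ℝ :=
  fun x h i j k l m =>
  -((A x m h * T' x l i j k - A x l h * T' x m i j k)
    + (A x m i * T' x h l j k - A x l i * T' x h m j k)
    + (A x m j * T' x h i l k - A x l j * T' x h i m k)
    + (A x m k * T' x h i j l - A x l k * T' x h i j m))

/-- The Tachibana tensor `Q(A,B)` of a symmetric (0,2)-tensor `A`
and a (0,2)-tensor `B`. -/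
def tach2 (A B : Ten2 n) : Pt n → Fin n → Fin n → Fin n → Fin n → ℝ :=
  fun x i j l m =>
  -((A x m i * B x l j - A x l i * B x m j) + (A x m j * B x i l - A x l j * B x i m))

/-- The Gödel metric on `ℝ⁴`: `g₁₁ = −a²`, `g₂₂ = (a²/2)e^{2x¹}`, `g₃₃ = −a²`,
`g₄₄ = a²`, `g₂₄ = g₄₂ = a²e^{x¹}`, all other components zero. -/
def godel (a : ℝ) : Ten2 4 := fun x i j =>
  ![![-a^2, 0, 0, 0],
    ![0, a^2/2 * Real.exp (2 * x 0), 0, a^2 * Real.exp (x 0)],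
    ![0, 0, -a^2, 0],
    ![0, a^2 * Real.exp (x 0), 0, a^2]] i j

/-- The 1-form `ω = (0, a e^{x¹}, 0, a)`. -/
def godelOmega (a : ℝ) (x : Pt 4) : Fin 4 → ℝ := ![0, a * Real.exp (x 0), 0, a]

/-!
The computation is direct. The Christoffel symbols of the Gödel metric depend on `x¹` only
through `e^{±x¹}`, and contracting the resulting curvature gives `S = a⁻² ω ⊗ ω`. The 1-form
`ω` is a unit covector, `g^{ij} ω_i ω_j = 1`, so tracing gives `κ = a⁻²`; being the outer
product of a nonzero covector with itself, `S` has rank one, and `α = 0` witnesses that the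
Gödel spacetime is quasi-Einstein.
-/

open Real Matrix

@[simp] theorem pderiv_const (c : ℝ) (i : Fin n) (x : Pt n) : pderiv i (fun _ => c) x = 0 := by
  simp [pderiv]

theorem pderiv_comp_apply {f : ℝ → ℝ} {f' : ℝ} {i j : Fin n} {x : Pt n}
    (hf : HasDerivAt f f' (x j)) :
    pderiv i (fun y => f (y j)) x = if i = j then f' else 0 := by
  have hfj : HasFDerivAt (fun y : Pt n => f (y j)) (f' • ContinuousLinearMap.proj j) x :=
    hf.comp_hasFDerivAt x (hasFDerivAt_apply (𝕜 := ℝ) j x)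
  rw [pderiv, hfj.fderiv]
  simp [Pi.single_apply, eq_comm]

@[simp] theorem pderiv_const_mul_exp_mul (c k : ℝ) (i j : Fin n) (x : Pt n) :
    pderiv i (fun y => c * exp (k * y j)) x = if i = j then c * k * exp (k * x j) else 0 := by
  have hexp : HasDerivAt (fun t => c * exp (k * t)) (c * (exp (k * x j) * k)) (x j) := by
    simpa using ((hasDerivAt_id (x j)).const_mul k).exp.const_mul c
  rw [pderiv_comp_apply hexp, mul_comm (exp _) k, mul_assoc]

@[simp] theorem pderiv_const_mul_exp (c : ℝ) (i j : Fin n) (x : Pt n) :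
    pderiv i (fun y => c * exp (y j)) x = if i = j then c * exp (x j) else 0 := by
  simpa using pderiv_const_mul_exp_mul c 1 i j x

@[simp] theorem pderiv_neg_exp_neg (i j : Fin n) (x : Pt n) :
    pderiv i (fun y => -exp (-y j)) x = if i = j then exp (-x j) else 0 := by
  simpa using pderiv_const_mul_exp_mul (-1) (-1) i j x

theorem Real.exp_two_mul (t : ℝ) : exp (2 * t) = exp t ^ 2 := by
  rw [← exp_nat_mul]
  norm_num

def cometric (g : Ten2 n) (x : Pt n) (ω η : Fin n → ℝ) : ℝ :=
  ∑ i, ∑ j, ginv g x i j * ω i * η j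

theorem scalarCurv_eq_of_ricci_eq {g : Ten2 n} {x : Pt n} {c : ℝ} {ω : Fin n → ℝ}
    (h : ∀ i j, ricci g x i j = c * ω i * ω j) : scalarCurv g x = c * cometric g x ω ω := by
  simp only [scalarCurv, cometric, h, Finset.mul_sum]
  exact Finset.sum_congr rfl fun i _ => Finset.sum_congr rfl fun j _ => by ring

theorem ginv_eq_of_mul_eq_one {g : Ten2 n} {x : Pt n} {M : Matrix (Fin n) (Fin n) ℝ}
    (h : Matrix.of (g x) * M = 1) : ginv g x = M := by
  funext i j
  rw [ginv, inv_eq_right_inv h]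

theorem Matrix.rank_vecMulVec_of_ne_zero {K m k : Type*} [Field K] [Fintype m] [Fintype k]
    {w : m → K} {v : k → K} (hw : w ≠ 0) (hv : v ≠ 0) : (vecMulVec w v).rank = 1 := by
  classical
  refine le_antisymm (rank_vecMulVec_le w v) (Nat.one_le_iff_ne_zero.2 fun h => ?_)
  obtain ⟨i, hi⟩ := Function.ne_iff.mp hw
  obtain ⟨j, hj⟩ := Function.ne_iff.mp hv
  rw [rank, Submodule.finrank_eq_zero, LinearMap.range_eq_bot] at h
  have hij := congrFun (LinearMap.congr_fun h (Pi.single j 1)) i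
  simp [mulVec_single, vecMulVec_apply] at hij
  exact hij.elim hi hj

section Godel

variable {a : ℝ}

def godelInv (a : ℝ) (x : Pt 4) : Matrix (Fin 4) (Fin 4) ℝ :=
  !![-1 / a ^ 2, 0, 0, 0;
    0, -2 / (a ^ 2 * exp (2 * x 0)), 0, 2 / (a ^ 2 * exp (x 0));
    0, 0, -1 / a ^ 2, 0;
    0, 2 / (a ^ 2 * exp (x 0)), 0, -1 / a ^ 2]

theorem ginv_godel (ha : a ≠ 0) (x : Pt 4) : ginv (godel a) x = godelInv a x := by
  refine ginv_eq_of_mul_eq_one ?_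
  ext i j
  fin_cases i <;> fin_cases j <;>
    simp [mul_apply, Fin.sum_univ_four, godel, godelInv, one_apply, exp_two_mul (x 0)] <;>
    field_simp <;> ring

def godelChristoffel (x : Pt 4) : Fin 4 → Fin 4 → Fin 4 → ℝ :=
  ![![![0, 0, 0, 0], ![0, 1 / 2 * exp (2 * x 0), 0, 1 / 2 * exp (x 0)], 0,
      ![0, 1 / 2 * exp (x 0), 0, 0]],
    ![![0, 0, 0, -exp (-x 0)], 0, 0, ![-exp (-x 0), 0, 0, 0]],
    0,
    ![![0, 1 / 2 * exp (x 0), 0, 1], ![1 / 2 * exp (x 0), 0, 0, 0], 0, ![1, 0, 0, 0]]]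

theorem christoffel_godel (ha : a ≠ 0) (h i j : Fin 4) :
    christoffel (godel a) h i j = fun x => godelChristoffel x h i j := by
  funext x
  fin_cases h <;> fin_cases i <;> fin_cases j <;>
    simp [christoffel, Fin.sum_univ_four, ginv_godel ha, godelInv, godel, godelChristoffel,
      exp_two_mul (x 0), exp_neg (x 0)] <;> field_simp <;> ring

theorem ricci_godel (ha : a ≠ 0) (x : Pt 4) (i j : Fin 4) :
    ricci (godel a) x i j = 1 / a ^ 2 * godelOmega a x i * godelOmega a x j := by
  fin_cases i <;> fin_cases j <;>
    simp [ricci, curvUp, Fin.sum_univ_four, christoffel_godel ha, godelChristoffel, godelOmega,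
      exp_two_mul (x 0), exp_neg (x 0)] <;> field_simp <;> ring

theorem cometric_godelOmega (ha : a ≠ 0) (x : Pt 4) :
    cometric (godel a) x (godelOmega a x) (godelOmega a x) = 1 := by
  simp [cometric, Fin.sum_univ_four, ginv_godel ha, godelInv, godelOmega, exp_two_mul (x 0)]
  field_simp
  ring

theorem scalarCurv_godel (ha : a ≠ 0) (x : Pt 4) : scalarCurv (godel a) x = 1 / a ^ 2 := by
  rw [scalarCurv_eq_of_ricci_eq (ricci_godel ha x), cometric_godelOmega ha, mul_one]

theorem rank_ricci_godel (ha : a ≠ 0) (x : Pt 4) : (Matrix.of (ricci (godel a) x)).rank = 1 := by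
  have hricci : Matrix.of (ricci (godel a) x) =
      vecMulVec ((1 / a ^ 2) • godelOmega a x) (godelOmega a x) := by
    ext i j
    simp [ricci_godel ha, vecMulVec_apply]
  have hω : godelOmega a x ≠ 0 := fun h => ha (congrFun h 3)
  rw [hricci, rank_vecMulVec_of_ne_zero (smul_ne_zero (by positivity) hω) hω]

end Godel

/-- For the Gödel metric the scalar curvature is `κ = 1/a²`,
the Ricci tensor is `S = κ ω ⊗ ω` with `ω = (0, a e^{x¹}, 0, a)`, the Ricci tensor
has rank 1 at every point, and the Gödel spacetime is quasi-Einstein. -/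
theorem godel_ricci_rank_one (a : ℝ) (ha : 0 < a) :
    (∀ x : Pt 4, scalarCurv (godel a) x = 1 / a^2) ∧
    (∀ (x : Pt 4) (i j : Fin 4),
        ricci (godel a) x i j = (1 / a^2) * godelOmega a x i * godelOmega a x j) ∧
    (∀ x : Pt 4, (Matrix.of (ricci (godel a) x)).rank = 1) ∧
    (∃ α : Pt 4 → ℝ, ∀ x : Pt 4,
        (Matrix.of fun i j => ricci (godel a) x i j - α x * godel a x i j).rank ≤ 1) := by
  have ha₀ : a ≠ 0 := ha.ne'
  refine ⟨scalarCurv_godel ha₀, ricci_godel ha₀, rank_ricci_godel ha₀, 0, fun x => ?_⟩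
  simpa using (rank_ricci_godel ha₀ x).le
end
end

section
/- The Ricci tensor of the Gödel metric is cyclic parallel: at every point of ℝ⁴ and for all indices i, j, k one has S_{ij,k} + S_{jk,i} + S_{ki,j} = 0. -/
noncomputable section

open scoped BigOperators

variable {n : ℕ}

namespace Godel

/-- `E c k x = c * exp (k * x 0)`. -/
def E (c k : ℝ) : Pt 4 → ℝ := fun x => c * Real.exp (k * x 0)

lemma pderiv_E (c k : ℝ) (i : Fin 4) (x : Pt 4) :
    pderiv i (E c k) x = if i = 0 then c * k * Real.exp (k * x 0) else 0 := by
  have h1 : HasFDerivAt (fun y : Pt 4 => y 0)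
      (ContinuousLinearMap.proj 0 : (Pt 4) →L[ℝ] ℝ) x :=
    ((ContinuousLinearMap.proj 0 : (Pt 4) →L[ℝ] ℝ)).hasFDerivAt
  have h4 := ((h1.const_mul k).exp).const_mul c
  have h5 : fderiv ℝ (E c k) x
      = c • Real.exp (k * x 0) • k • (ContinuousLinearMap.proj 0 : (Pt 4) →L[ℝ] ℝ) :=
    h4.fderiv
  rw [pderiv, h5]
  simp [Pi.single_apply]
  rcases eq_or_ne i 0 with h | h <;> simp [h, eq_comm] <;> ring

/-- coefficient table for the metric -/
def gC (a : ℝ) : Fin 4 → Fin 4 → ℝ :=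
  ![![-a^2, 0, 0, 0], ![0, a^2/2, 0, a^2], ![0, 0, -a^2, 0], ![0, a^2, 0, a^2]]
/-- exponent table for the metric -/
def gK : Fin 4 → Fin 4 → ℝ :=
  ![![0, 0, 0, 0], ![0, 2, 0, 1], ![0, 0, 0, 0], ![0, 1, 0, 0]]

lemma godel_fun (a : ℝ) (i j : Fin 4) :
    (fun x => godel a x i j) = E (gC a i j) (gK i j) := by
  fin_cases i <;> fin_cases j <;>
    (funext x; simp [godel, E, gC, gK, Matrix.vecHead, Matrix.vecTail])

end Godel

namespace Godel

lemma exp_0 (u : ℝ) : Real.exp (0 * u) = 1 := by rw [zero_mul, Real.exp_zero]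
lemma exp_1 (u : ℝ) : Real.exp (1 * u) = Real.exp u := by rw [one_mul]
lemma exp_2 (u : ℝ) : Real.exp (2 * u) = Real.exp u * Real.exp u := by
  rw [two_mul, Real.exp_add]
lemma exp_m1 (u : ℝ) : Real.exp (-1 * u) = (Real.exp u)⁻¹ := by
  rw [neg_one_mul, Real.exp_neg]
lemma exp_m2 (u : ℝ) : Real.exp (-2 * u) = (Real.exp u * Real.exp u)⁻¹ := by
  rw [show (-2:ℝ)*u = -(u+u) by ring, Real.exp_neg, Real.exp_add]

/-- coefficient table for the inverse metric -/
def iC (a : ℝ) : Fin 4 → Fin 4 → ℝ :=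
  ![![-1/a^2, 0, 0, 0], ![0, -2/a^2, 0, 2/a^2], ![0, 0, -1/a^2, 0], ![0, 2/a^2, 0, -1/a^2]]
/-- exponent table for the inverse metric -/
def iK : Fin 4 → Fin 4 → ℝ :=
  ![![0, 0, 0, 0], ![0, -2, 0, -1], ![0, 0, 0, 0], ![0, -1, 0, 0]]

lemma ginv_eq (a : ℝ) (ha : a ≠ 0) (x : Pt 4) (i j : Fin 4) :
    ginv (godel a) x i j = E (iC a i j) (iK i j) x := by
  have ht := Real.exp_ne_zero (x 0)
  have hM : (Matrix.of (godel a x))⁻¹ = Matrix.of (fun i j => E (iC a i j) (iK i j) x) := by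
    apply Matrix.inv_eq_right_inv
    ext i j
    fin_cases i <;> fin_cases j <;>
      (simp [Matrix.mul_apply, Fin.sum_univ_four, godel, E, iC, iK, Matrix.one_apply,
        Matrix.vecHead, Matrix.vecTail, exp_0, exp_1, exp_2, exp_m1, exp_m2];
       try simp only [show ∀ u:ℝ, (-(u * 2)) = (-u) + (-u) from fun u => by ring,
         show ∀ u:ℝ, (u * 2) = u + u from fun u => by ring, Real.exp_add, Real.exp_neg];
       try field_simp;
       try simp only [show (x 0 * 2) = x 0 + x 0 from by ring, exp_2, Real.exp_add];
       try ring)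
  rw [ginv, hM]
  rfl

end Godel

namespace Godel

/-- coefficient table for the Christoffel symbols -/
def cC : Fin 4 → Fin 4 → Fin 4 → ℝ :=
  ![![![0,0,0,0],![0,1/2,0,1/2],![0,0,0,0],![0,1/2,0,0]],
    ![![0,0,0,-1],![0,0,0,0],![0,0,0,0],![-1,0,0,0]],
    ![![0,0,0,0],![0,0,0,0],![0,0,0,0],![0,0,0,0]],
    ![![0,1/2,0,1],![1/2,0,0,0],![0,0,0,0],![1,0,0,0]]]
/-- exponent table for the Christoffel symbols -/
def cK : Fin 4 → Fin 4 → Fin 4 → ℝ :=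
  ![![![0,0,0,0],![0,2,0,1],![0,0,0,0],![0,1,0,0]],
    ![![0,0,0,-1],![0,0,0,0],![0,0,0,0],![-1,0,0,0]],
    ![![0,0,0,0],![0,0,0,0],![0,0,0,0],![0,0,0,0]],
    ![![0,1,0,0],![1,0,0,0],![0,0,0,0],![0,0,0,0]]]

set_option maxHeartbeats 4000000 in
lemma chris_eq (a : ℝ) (ha : a ≠ 0) (h i j : Fin 4) :
    christoffel (godel a) h i j = E (cC h i j) (cK h i j) := by
  have hg : ∀ l m : Fin 4, (fun y : Pt 4 => godel a y l m) = E (gC a l m) (gK l m) :=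
    godel_fun a
  funext x
  have ht := Real.exp_ne_zero (x 0)
  fin_cases h <;> fin_cases i <;> fin_cases j <;>
    (simp only [christoffel, Fin.sum_univ_four, hg, pderiv_E, ginv_eq a ha];
     simp [E, gC, gK, iC, iK,
       cC, cK, Matrix.vecHead, Matrix.vecTail, exp_0, exp_1, exp_2, exp_m1, exp_m2];
     try simp only [show ∀ u:ℝ, (-(u * 2)) = (-u) + (-u) from fun u => by ring,
       show ∀ u:ℝ, (u * 2) = u + u from fun u => by ring, Real.exp_add, Real.exp_neg];
     try field_simp;
     try simp only [show (x 0 * 2) = x 0 + x 0 from by ring, exp_2, Real.exp_add];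
     try ring)

end Godel

namespace Godel

/-- coefficient table for the Ricci tensor -/
def rC : Fin 4 → Fin 4 → ℝ :=
  ![![0,0,0,0],![0,1,0,1],![0,0,0,0],![0,1,0,1]]
/-- exponent table for the Ricci tensor -/
def rK : Fin 4 → Fin 4 → ℝ :=
  ![![0,0,0,0],![0,2,0,1],![0,0,0,0],![0,1,0,0]]

set_option maxHeartbeats 4000000 in
lemma ricci_eq (a : ℝ) (ha : a ≠ 0) (x : Pt 4) (i j : Fin 4) :
    ricci (godel a) x i j = E (rC i j) (rK i j) x := by
  have ht := Real.exp_ne_zero (x 0)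
  fin_cases i <;> fin_cases j <;>
    (simp only [ricci, curvUp, Fin.sum_univ_four, chris_eq a ha, pderiv_E];
     simp [E, cC, cK, rC, rK, Matrix.vecHead, Matrix.vecTail,
       exp_0, exp_1, exp_2, exp_m1, exp_m2];
     try simp only [show ∀ u:ℝ, (-(u * 2)) = (-u) + (-u) from fun u => by ring,
       show ∀ u:ℝ, (u * 2) = u + u from fun u => by ring, Real.exp_add, Real.exp_neg];
     try field_simp;
     try simp only [show (x 0 * 2) = x 0 + x 0 from by ring, exp_2, Real.exp_add];
     try ring)

end Godel

set_option maxHeartbeats 8000000 in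
/-- The Ricci tensor of the Gödel metric is cyclic parallel:
`S_{ij,k} + S_{jk,i} + S_{ki,j} = 0` at every point. -/
theorem godel_ricci_cyclic_parallel (a : ℝ) (ha : 0 < a) :
    ∀ (x : Pt 4) (i j k : Fin 4),
      ricciCov (godel a) x i j k + ricciCov (godel a) x j k i
        + ricciCov (godel a) x k i j = 0 := by
  intro x i j k
  have ha' : a ≠ 0 := ha.ne'
  have ht := Real.exp_ne_zero (x 0)
  have hr : ∀ i j : Fin 4, (fun y : Pt 4 => ricci (godel a) y i j)
      = Godel.E (Godel.rC i j) (Godel.rK i j) :=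
    fun i j => funext fun y => Godel.ricci_eq a ha' y i j
  fin_cases i <;> fin_cases j <;> fin_cases k <;>
    (simp only [ricciCov, Fin.sum_univ_four, hr, Godel.pderiv_E, Godel.chris_eq a ha',
       Godel.ricci_eq a ha'];
     simp [Godel.E, Godel.cC, Godel.cK, Godel.rC, Godel.rK, Matrix.vecHead, Matrix.vecTail,
       Godel.exp_0, Godel.exp_1, Godel.exp_2, Godel.exp_m1, Godel.exp_m2];
     try simp only [show ∀ u:ℝ, (-(u * 2)) = (-u) + (-u) from fun u => by ring,
       show ∀ u:ℝ, (u * 2) = u + u from fun u => by ring, Real.exp_add, Real.exp_neg];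
     try field_simp;
     try simp only [show (x 0 * 2) = x 0 + x 0 from by ring, Godel.exp_2, Real.exp_add];
     try ring)
end
end
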